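/- arXiv:2003.08063 — 2 statements merged into one kernel-verified Lean document; each statement's English description precedes it below -/
import Mathlib

section
/- Let f : ℝⁿ × ℝᵐ → ℝⁿ be C¹ and let x(s, w) solve ẋ = f(x, w), x(0) = x₀ (independent of w), with x C¹ in (s, w). Let ℓ(w) = g(x(S, w)) for g ∈ C¹. If λ : [0,S] → ℝⁿ solves the adjoint equation λ̇ᵀ = -λᵀ ∂f/∂x(x(s,w), w) backward from λ(S)ᵀ = ∂g/∂x(x(S,w)), then dℓ/dw = ∫₀^S λ(τ)ᵀ ∂f/∂w (x(τ,w), w) dτ. -/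
/-!
Differentiating the integral form `x(s, w) = x₀ + ∫₀ˢ f(x(t, w), w) dt` under the integral sign
shows that the sensitivity `u(s) = ∂_w x(s, w₀) v` solves the linearised equation
`u̇ = ∂ₓf · u + ∂_w f · v` with `u(0) = 0`. Along the adjoint `λ` the `∂ₓf` terms cancel in the
derivative of `⟪λ, u⟫`, which is therefore `⟪λ, ∂_w f · v⟫`. Integrating over `[0, S]` and using
`λ(S) = ∇g(x(S))` identifies `⟪λ(S), u(S)⟫` with `dℓ(w₀) v`.
-/

open scoped RealInnerProductSpace
open MeasureTheory Metric

section PartialDerivatives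

variable {E F G : Type*} [NormedAddCommGroup E] [NormedSpace ℝ E] [NormedAddCommGroup F]
  [NormedSpace ℝ F] [NormedAddCommGroup G] [NormedSpace ℝ G] {f : E → F → G}

theorem fderiv_partial_fst {a : E} {b : F}
    (hf : DifferentiableAt ℝ (fun p : E × F => f p.1 p.2) (a, b)) :
    fderiv ℝ (fun y => f y b) a =
      (fderiv ℝ (fun p : E × F => f p.1 p.2) (a, b)).comp (.inl ℝ E F) :=
  (hf.hasFDerivAt.comp (f := fun y => (y, b)) a (hasFDerivAt_prodMk_left a b)).fderiv

theorem fderiv_partial_snd {a : E} {b : F}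
    (hf : DifferentiableAt ℝ (fun p : E × F => f p.1 p.2) (a, b)) :
    fderiv ℝ (f a) b = (fderiv ℝ (fun p : E × F => f p.1 p.2) (a, b)).comp (.inr ℝ E F) :=
  (hf.hasFDerivAt.comp (f := fun w => (a, w)) b (hasFDerivAt_prodMk_right a b)).fderiv

theorem ContDiff.continuous_fderiv_partial_snd
    (hf : ContDiff ℝ 1 fun p : E × F => f p.1 p.2) :
    Continuous fun p : E × F => fderiv ℝ (f p.1) p.2 := by
  have hdiff := hf.differentiable one_ne_zero
  simp_rw [fun p : E × F => fderiv_partial_snd (hdiff (p.1, p.2))]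
  exact (hf.continuous_fderiv one_ne_zero).clm_comp continuous_const

theorem hasFDerivAt_comp_graph {φ : F → E} {b : F}
    (hf : DifferentiableAt ℝ (fun p : E × F => f p.1 p.2) (φ b, b))
    (hφ : DifferentiableAt ℝ φ b) :
    HasFDerivAt (fun w => f (φ w) w)
      ((fderiv ℝ (fun y => f y b) (φ b)).comp (fderiv ℝ φ b) + fderiv ℝ (f (φ b)) b) b := by
  rw [fderiv_partial_fst hf, fderiv_partial_snd hf]
  refine (hf.hasFDerivAt.comp (f := fun w => (φ w, w)) b
    (hφ.hasFDerivAt.prodMk (hasFDerivAt_id b))).congr_fderiv ?_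
  ext v
  simp [← map_add]

end PartialDerivatives

theorem hasFDerivAt_intervalIntegral_of_contDiff {F G : Type*} [NormedAddCommGroup F]
    [NormedSpace ℝ F] [ProperSpace F] [NormedAddCommGroup G] [NormedSpace ℝ G] {f : ℝ → F → G}
    (hf : ContDiff ℝ 1 fun p : ℝ × F => f p.1 p.2) (a b : ℝ) (w₀ : F) :
    HasFDerivAt (fun w => ∫ t in a..b, f t w) (∫ t in a..b, fderiv ℝ (f t) w₀) w₀ := by
  have hcont : Continuous fun p : ℝ × F => f p.1 p.2 := hf.continuous
  have hcont' := hf.continuous_fderiv_partial_snd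
  obtain ⟨M, hM⟩ : ∃ M, ∀ p ∈ Set.uIcc a b ×ˢ closedBall w₀ 1, ‖fderiv ℝ (f p.1) p.2‖ ≤ M :=
    (isCompact_uIcc.prod (isCompact_closedBall w₀ 1)).exists_bound_of_continuousOn
      hcont'.continuousOn
  refine intervalIntegral.hasFDerivAt_integral_of_dominated_of_fderiv_le
    (F' := fun w t => fderiv ℝ (f t) w) (bound := fun _ => M) (ball_mem_nhds w₀ one_pos)
    (.of_forall fun w => (hcont.comp (continuous_id.prodMk continuous_const)).aestronglyMeasurable)
    ((hcont.comp (continuous_id.prodMk continuous_const)).intervalIntegrable a b)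
    (hcont'.comp (continuous_id.prodMk continuous_const)).aestronglyMeasurable
    (.of_forall fun t ht w hw => hM (t, w) ⟨Set.uIoc_subset_uIcc ht, ball_subset_closedBall hw⟩)
    intervalIntegrable_const (.of_forall fun t _ w _ => ?_)
  exact ((hf.comp (contDiff_const.prodMk contDiff_id)).differentiable one_ne_zero w).hasFDerivAt

section Flow

variable {E F : Type*} [NormedAddCommGroup E] [NormedSpace ℝ E] [CompleteSpace E]
  [NormedAddCommGroup F] [NormedSpace ℝ F] [ProperSpace F] {f : E → F → E} {x : ℝ → F → E}
  {x₀ : E}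

theorem hasFDerivAt_flow_param (hf : ContDiff ℝ 1 fun p : E × F => f p.1 p.2)
    (hx : ContDiff ℝ 1 fun p : ℝ × F => x p.1 p.2) (hx0 : ∀ w, x 0 w = x₀)
    (hsol : ∀ s w, HasDerivAt (fun t => x t w) (f (x s w) w) s) (s : ℝ) (w₀ : F) :
    HasFDerivAt (x s) (∫ t in (0:ℝ)..s, fderiv ℝ (fun w => f (x t w) w) w₀) w₀ := by
  have hG : ContDiff ℝ 1 fun p : ℝ × F => f (x p.1 p.2) p.2 := hf.comp (hx.prodMk contDiff_snd)
  have hint : x s = fun w => x₀ + ∫ t in (0:ℝ)..s, f (x t w) w := by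
    funext w
    rw [intervalIntegral.integral_eq_sub_of_hasDerivAt (fun t _ => hsol t w)
      ((hG.continuous.comp (continuous_id.prodMk continuous_const)).intervalIntegrable 0 s),
      hx0, add_sub_cancel]
  rw [hint]
  exact (hasFDerivAt_intervalIntegral_of_contDiff hG 0 s w₀).const_add x₀

theorem hasDerivAt_fderiv_flow_param (hf : ContDiff ℝ 1 fun p : E × F => f p.1 p.2)
    (hx : ContDiff ℝ 1 fun p : ℝ × F => x p.1 p.2) (hx0 : ∀ w, x 0 w = x₀)
    (hsol : ∀ s w, HasDerivAt (fun t => x t w) (f (x s w) w) s) (s : ℝ) (w₀ v : F) :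
    HasDerivAt (fun t => fderiv ℝ (x t) w₀ v)
      (fderiv ℝ (fun y => f y w₀) (x s w₀) (fderiv ℝ (x s) w₀ v) + fderiv ℝ (f (x s w₀)) w₀ v)
      s := by
  have hG : ContDiff ℝ 1 fun p : ℝ × F => f (x p.1 p.2) p.2 := hf.comp (hx.prodMk contDiff_snd)
  have hΦ : Continuous fun t => fderiv ℝ (fun w => f (x t w) w) w₀ :=
    (hG.continuous_fderiv_partial_snd (f := fun t w => f (x t w) w)).comp
      (continuous_id.prodMk continuous_const)
  have hu : (fun t => fderiv ℝ (x t) w₀ v) =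
      fun t => ∫ τ in (0:ℝ)..t, fderiv ℝ (fun w => f (x τ w) w) w₀ v := by
    funext t
    rw [(hasFDerivAt_flow_param hf hx hx0 hsol t w₀).fderiv,
      ContinuousLinearMap.intervalIntegral_apply (hΦ.intervalIntegrable 0 t)]
  have hchain := hasFDerivAt_comp_graph (hf.differentiable one_ne_zero (x s w₀, w₀))
    ((hx.comp (contDiff_const.prodMk contDiff_id)).differentiable one_ne_zero w₀)
  rw [hu]
  convert ((hΦ.clm_apply continuous_const).integral_hasStrictDerivAt 0 s).hasDerivAt using 1
  rw [hchain.fderiv]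
  rfl

end Flow

section Adjoint

variable {E : Type*} [NormedAddCommGroup E] [InnerProductSpace ℝ E]

theorem integral_inner_eq_sub_of_adjoint {l dl u : ℝ → E} {A : ℝ → E →L[ℝ] E} {b : ℝ → E}
    {a c : ℝ} (hl : ∀ s ∈ Set.uIcc a c, HasDerivAt l (dl s) s)
    (hu : ∀ s ∈ Set.uIcc a c, HasDerivAt u (A s (u s) + b s) s)
    (hadj : ∀ s ∈ Set.uIcc a c, ∀ v, ⟪dl s, v⟫ = -⟪l s, A s v⟫)
    (hint : IntervalIntegrable (fun s => ⟪l s, b s⟫) volume a c) :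
    ∫ s in a..c, ⟪l s, b s⟫ = ⟪l c, u c⟫ - ⟪l a, u a⟫ := by
  refine intervalIntegral.integral_eq_sub_of_hasDerivAt (f := fun s => ⟪l s, u s⟫)
    (fun s hs => ?_) hint
  have h := (hl s hs).inner ℝ (hu s hs)
  rwa [hadj s hs, inner_add_right, add_right_comm, add_neg_cancel, zero_add] at h

end Adjoint

theorem stmt_10_general {n m : ℕ}
    (f : EuclideanSpace ℝ (Fin n) → EuclideanSpace ℝ (Fin m) → EuclideanSpace ℝ (Fin n))
    (hf : ContDiff ℝ 1 fun p : EuclideanSpace ℝ (Fin n) × EuclideanSpace ℝ (Fin m) => f p.1 p.2)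
    (x : ℝ → EuclideanSpace ℝ (Fin m) → EuclideanSpace ℝ (Fin n))
    (x₀ : EuclideanSpace ℝ (Fin n)) (hx0 : ∀ w, x 0 w = x₀)
    (hx : ContDiff ℝ 1 fun p : ℝ × EuclideanSpace ℝ (Fin m) => x p.1 p.2)
    (hsol : ∀ (s : ℝ) (w : EuclideanSpace ℝ (Fin m)), HasDerivAt (fun t => x t w) (f (x s w) w) s)
    (g : EuclideanSpace ℝ (Fin n) → ℝ) (hg : ContDiff ℝ 1 g)
    (S : ℝ) (w₀ : EuclideanSpace ℝ (Fin m))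
    (l dl : ℝ → EuclideanSpace ℝ (Fin n))
    (hl : ∀ s : ℝ, HasDerivAt l (dl s) s)
    (hadj : ∀ (s : ℝ) (v : EuclideanSpace ℝ (Fin n)),
      ⟪dl s, v⟫ = -⟪l s, fderiv ℝ (fun y => f y w₀) (x s w₀) v⟫)
    (hterm : ∀ v : EuclideanSpace ℝ (Fin n), ⟪l S, v⟫ = fderiv ℝ g (x S w₀) v) :
    ∀ v : EuclideanSpace ℝ (Fin m),
      fderiv ℝ (fun w => g (x S w)) w₀ v =
        ∫ τ in (0:ℝ)..S, ⟪l τ, fderiv ℝ (fun w => f (x τ w₀) w) w₀ v⟫ := by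
  intro v
  have hxS : DifferentiableAt ℝ (x S) w₀ :=
    (hx.comp (contDiff_const.prodMk contDiff_id)).differentiable one_ne_zero w₀
  have hsens_zero : fderiv ℝ (x 0) w₀ = 0 := by
    rw [show x 0 = fun _ => x₀ from funext hx0, fderiv_const_apply]
  have hxc : Continuous fun τ => x τ w₀ :=
    hx.continuous.comp (continuous_id.prodMk continuous_const)
  have hforcing : Continuous fun τ => fderiv ℝ (fun w => f (x τ w₀) w) w₀ v :=
    (hf.continuous_fderiv_partial_snd.comp (hxc.prodMk continuous_const)).clm_apply
      continuous_const
  have hlc : Continuous l := continuous_iff_continuousAt.2 fun s => (hl s).continuousAt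
  calc fderiv ℝ (fun w => g (x S w)) w₀ v = fderiv ℝ g (x S w₀) (fderiv ℝ (x S) w₀ v) := by
        rw [fderiv_fun_comp w₀ (hg.differentiable one_ne_zero _) hxS,
          ContinuousLinearMap.comp_apply]
    _ = ⟪l S, fderiv ℝ (x S) w₀ v⟫ - ⟪l 0, fderiv ℝ (x 0) w₀ v⟫ := by
        rw [hterm, hsens_zero, zero_apply, inner_zero_right, sub_zero]
    _ = ∫ τ in (0:ℝ)..S, ⟪l τ, fderiv ℝ (fun w => f (x τ w₀) w) w₀ v⟫ :=
        (integral_inner_eq_sub_of_adjoint (fun s _ => hl s)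
          (fun s _ => hasDerivAt_fderiv_flow_param hf hx hx0 hsol s w₀ v) (fun s _ => hadj s)
          ((hlc.inner hforcing).intervalIntegrable 0 S)).symm

theorem stmt_10 {n m : ℕ}
    (f : EuclideanSpace ℝ (Fin n) → EuclideanSpace ℝ (Fin m) → EuclideanSpace ℝ (Fin n))
    (hf : ContDiff ℝ 1 fun p : EuclideanSpace ℝ (Fin n) × EuclideanSpace ℝ (Fin m) => f p.1 p.2)
    (x : ℝ → EuclideanSpace ℝ (Fin m) → EuclideanSpace ℝ (Fin n))
    (x₀ : EuclideanSpace ℝ (Fin n)) (hx0 : ∀ w, x 0 w = x₀)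
    (hx : ContDiff ℝ 1 fun p : ℝ × EuclideanSpace ℝ (Fin m) => x p.1 p.2)
    (hsol : ∀ (s : ℝ) (w : EuclideanSpace ℝ (Fin m)), HasDerivAt (fun t => x t w) (f (x s w) w) s)
    (g : EuclideanSpace ℝ (Fin n) → ℝ) (hg : ContDiff ℝ 1 g)
    (S : ℝ) (hS : 0 < S) (w₀ : EuclideanSpace ℝ (Fin m))
    (l dl : ℝ → EuclideanSpace ℝ (Fin n))
    (hl : ∀ s : ℝ, HasDerivAt l (dl s) s)
    (hadj : ∀ (s : ℝ) (v : EuclideanSpace ℝ (Fin n)),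
      ⟪dl s, v⟫ = -⟪l s, fderiv ℝ (fun y => f y w₀) (x s w₀) v⟫)
    (hterm : ∀ v : EuclideanSpace ℝ (Fin n), ⟪l S, v⟫ = fderiv ℝ g (x S w₀) v) :
    ∀ v : EuclideanSpace ℝ (Fin m),
      fderiv ℝ (fun w => g (x S w)) w₀ v =
        ∫ τ in (0:ℝ)..S, ⟪l τ, fderiv ℝ (fun w => f (x τ w₀) w) w₀ v⟫ :=
  stmt_10_general f hf x x₀ hx0 hx hsol g hg S w₀ l dl hl hadj hterm
end

section
/- Under the same smoothness assumptions, for the integral (back-propagated) cost ℓ(w) = ∫₀^S g(x(τ, w)) dτ, if λ solves λ̇ᵀ = -λᵀ ∂f/∂x - ∂g/∂x backward from λ(S) = 0, then dℓ/dw = ∫₀^S λ(τ)ᵀ ∂f/∂w dτ. -/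
/-!
Since `d/dτ ⟪λ, x⟫ = ⟪λ, f(x, w)⟫ + ⟪λ̇, x⟫`, `λ(S) = 0` and `x(0, w) = x₀`, the cost equals
`∫₀^S L(τ, w) dτ + ⟪λ(0), x₀⟫` for the Lagrangian `L = g(x) + ⟪λ, f(x, w)⟫ + ⟪λ̇, x⟫`, and the
boundary term does not depend on `w`. Differentiating under the integral sign, the adjoint equation
cancels every term of `∂L/∂w` containing `∂x/∂w`, leaving `⟪λ, ∂f/∂w⟫`. This way `∂x/∂w` is never
differentiated in time.
-/

open scoped RealInnerProductSpace
open ContinuousLinearMap Metric MeasureTheory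

section PartialDerivatives

variable {E W G : Type*} [NormedAddCommGroup E] [NormedSpace ℝ E]
  [NormedAddCommGroup W] [NormedSpace ℝ W] [NormedAddCommGroup G] [NormedSpace ℝ G]
  {F : E → W → G}

theorem fderiv_partial_left_eq {y : E} {w : W}
    (hF : DifferentiableAt ℝ (fun p : E × W => F p.1 p.2) (y, w)) :
    fderiv ℝ (fun z => F z w) y
      = (fderiv ℝ (fun p : E × W => F p.1 p.2) (y, w)).comp (inl ℝ E W) := by
  have h := HasFDerivAt.comp (f := fun z => (z, w)) y hF.hasFDerivAt
    (hasFDerivAt_prodMk_left y w)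
  exact h.fderiv

theorem fderiv_partial_right_eq {y : E} {w : W}
    (hF : DifferentiableAt ℝ (fun p : E × W => F p.1 p.2) (y, w)) :
    fderiv ℝ (fun u => F y u) w
      = (fderiv ℝ (fun p : E × W => F p.1 p.2) (y, w)).comp (inr ℝ E W) := by
  have h := HasFDerivAt.comp (f := fun u => (y, u)) w hF.hasFDerivAt
    (hasFDerivAt_prodMk_right y w)
  exact h.fderiv

theorem ContDiff.continuous_fderiv_partial_left
    (hF : ContDiff ℝ 1 fun p : E × W => F p.1 p.2) :
    Continuous fun p : E × W => fderiv ℝ (fun z => F z p.2) p.1 := by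
  simp_rw [fun p : E × W => fderiv_partial_left_eq (hF.differentiable one_ne_zero (p.1, p.2))]
  exact (hF.continuous_fderiv one_ne_zero).clm_comp continuous_const

theorem hasFDerivAt_uncurry_comp_prodMk {φ : W → E} {w₀ : W}
    (hF : DifferentiableAt ℝ (fun p : E × W => F p.1 p.2) (φ w₀, w₀))
    (hφ : DifferentiableAt ℝ φ w₀) :
    HasFDerivAt (fun w => F (φ w) w)
      ((fderiv ℝ (fun z => F z w₀) (φ w₀)).comp (fderiv ℝ φ w₀)
        + fderiv ℝ (fun u => F (φ w₀) u) w₀) w₀ := by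
  rw [fderiv_partial_left_eq hF, fderiv_partial_right_eq hF]
  have h := HasFDerivAt.comp (f := fun w => (φ w, w)) w₀ hF.hasFDerivAt
    (hφ.hasFDerivAt.prodMk (hasFDerivAt_id w₀))
  exact h.congr_fderiv (by ext v; simp [← map_add])

end PartialDerivatives

theorem continuous_of_inner_eq_apply {X E : Type*} [TopologicalSpace X]
    [NormedAddCommGroup E] [InnerProductSpace ℝ E] [CompleteSpace E]
    {u : X → E} {φ : X → E →L[ℝ] ℝ} (hφ : Continuous φ) (h : ∀ s v, ⟪u s, v⟫ = φ s v) :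
    Continuous u := by
  have hu : u = fun s => (InnerProductSpace.toDual ℝ E).symm (φ s) := by
    funext s
    exact ext_inner_right ℝ fun v => by rw [h, InnerProductSpace.toDual_symm_apply]
  rw [hu]
  exact (InnerProductSpace.toDual ℝ E).symm.continuous.comp hφ

theorem integral_inner_add_inner_deriv_eq_sub {E : Type*} [NormedAddCommGroup E]
    [InnerProductSpace ℝ E] {l l' y y' : ℝ → E} (hl : ∀ t, HasDerivAt l (l' t) t)
    (hy : ∀ t, HasDerivAt y (y' t) t) (hl' : Continuous l') (hy' : Continuous y') (a b : ℝ) :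
    ∫ t in a..b, (⟪l t, y' t⟫ + ⟪l' t, y t⟫) = ⟪l b, y b⟫ - ⟪l a, y a⟫ := by
  have hlc : Continuous l := continuous_iff_continuousAt.2 fun t => (hl t).continuousAt
  have hyc : Continuous y := continuous_iff_continuousAt.2 fun t => (hy t).continuousAt
  exact intervalIntegral.integral_eq_sub_of_hasDerivAt (fun t _ => (hl t).inner ℝ (hy t))
    (((hlc.inner hy').add (hl'.inner hyc)).intervalIntegrable a b)

section ParametricIntegral

variable {W R : Type*} [NormedAddCommGroup W] [NormedSpace ℝ W] [ProperSpace W]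
  [NormedAddCommGroup R] [NormedSpace ℝ R]

theorem hasFDerivAt_intervalIntegral_of_continuous_fderiv {F : ℝ → W → R}
    {F' : ℝ → W → W →L[ℝ] R} (hF : Continuous (Function.uncurry F))
    (hF' : Continuous (Function.uncurry F')) (hderiv : ∀ τ w, HasFDerivAt (F τ) (F' τ w) w)
    (a b : ℝ) (w₀ : W) :
    HasFDerivAt (fun w => ∫ τ in a..b, F τ w) (∫ τ in a..b, F' τ w₀) w₀ := by
  obtain ⟨C, hC⟩ : ∃ C, ∀ p ∈ Set.uIcc a b ×ˢ closedBall w₀ 1, ‖F' p.1 p.2‖ ≤ C :=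
    (isCompact_uIcc.prod (isCompact_closedBall w₀ 1)).exists_bound_of_continuousOn
      hF'.continuousOn
  have hF_slice : ∀ w, Continuous fun τ => F τ w := fun w =>
    hF.comp (continuous_id.prodMk continuous_const)
  exact intervalIntegral.hasFDerivAt_integral_of_dominated_of_fderiv_le (bound := fun _ => C)
    (ball_mem_nhds w₀ one_pos) (.of_forall fun w => (hF_slice w).aestronglyMeasurable)
    ((hF_slice w₀).intervalIntegrable a b)
    (hF'.comp (continuous_id.prodMk continuous_const)).aestronglyMeasurable
    (ae_of_all _ fun τ hτ w hw => hC (τ, w) ⟨Set.uIoc_subset_uIcc hτ, ball_subset_closedBall hw⟩)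
    intervalIntegrable_const (ae_of_all _ fun τ _ w _ => hderiv τ w)

theorem fderiv_intervalIntegral_comp_apply_of_contDiff {P : Type*} [NormedAddCommGroup P]
    [NormedSpace ℝ P] [CompleteSpace R] {K : P × W → R} (hK : ContDiff ℝ 1 K) {c : ℝ → P}
    (hc : Continuous c) (a b : ℝ) (w₀ v : W) :
    fderiv ℝ (fun w => ∫ τ in a..b, K (c τ, w)) w₀ v
      = ∫ τ in a..b, fderiv ℝ (fun w => K (c τ, w)) w₀ v := by
  have hcK : Continuous fun q : ℝ × W => (c q.1, q.2) :=
    (hc.comp continuous_fst).prodMk continuous_snd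
  have hK' : Continuous fun q : ℝ × W => (fderiv ℝ K (c q.1, q.2)).comp (inr ℝ P W) :=
    ((hK.continuous_fderiv one_ne_zero).comp hcK).clm_comp continuous_const
  have hderiv : ∀ τ w,
      HasFDerivAt (fun u => K (c τ, u)) ((fderiv ℝ K (c τ, w)).comp (inr ℝ P W)) w :=
    fun τ w => (hK.differentiable one_ne_zero _).hasFDerivAt.comp w
      (hasFDerivAt_prodMk_right _ w)
  have hK'_slice : Continuous fun τ => (fderiv ℝ K (c τ, w₀)).comp (inr ℝ P W) :=
    hK'.comp (continuous_id.prodMk continuous_const)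
  rw [(hasFDerivAt_intervalIntegral_of_continuous_fderiv (F := fun τ w => K (c τ, w))
      (F' := fun τ w => (fderiv ℝ K (c τ, w)).comp (inr ℝ P W))
      (hK.continuous.comp hcK) hK' hderiv a b w₀).fderiv,
    intervalIntegral_apply (hK'_slice.intervalIntegrable a b)]
  exact intervalIntegral.integral_congr fun τ _ => by rw [(hderiv τ w₀).fderiv]

end ParametricIntegral

section Lagrangian

variable {E W : Type*} [NormedAddCommGroup E] [InnerProductSpace ℝ E]

def lagrangian (f : E → W → E) (g : E → ℝ) (lam dlam y : E) (w : W) : ℝ :=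
  g y + ⟪lam, f y w⟫ + ⟪dlam, y⟫

theorem integral_lagrangian_eq {f : E → W → E} {g : E → ℝ} {w : W} {y l dl : ℝ → E}
    (hf : Continuous fun z => f z w) (hg : Continuous g)
    (hy : ∀ t, HasDerivAt y (f (y t) w) t) (hl : ∀ t, HasDerivAt l (dl t) t)
    (hdl : Continuous dl) (a b : ℝ) :
    ∫ t in a..b, lagrangian f g (l t) (dl t) (y t) w
      = (∫ t in a..b, g (y t)) + (⟪l b, y b⟫ - ⟪l a, y a⟫) := by
  have hyc : Continuous y := continuous_iff_continuousAt.2 fun t => (hy t).continuousAt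
  have hlc : Continuous l := continuous_iff_continuousAt.2 fun t => (hl t).continuousAt
  have hg_int : IntervalIntegrable (fun t => g (y t)) volume a b :=
    (hg.comp hyc).intervalIntegrable a b
  have hrest : IntervalIntegrable (fun t => ⟪l t, f (y t) w⟫ + ⟪dl t, y t⟫) volume a b :=
    ((hlc.inner (hf.comp hyc)).add (hdl.inner hyc)).intervalIntegrable a b
  rw [← integral_inner_add_inner_deriv_eq_sub (y' := fun t => f (y t) w) hl hy hdl
    (hf.comp hyc) a b, ← intervalIntegral.integral_add hg_int hrest]
  exact intervalIntegral.integral_congr fun t _ => by simp only [lagrangian]; ring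

theorem fderiv_lagrangian_comp_apply [NormedAddCommGroup W] [NormedSpace ℝ W]
    {f : E → W → E} {g : E → ℝ} {lam dlam : E} {y : W → E} {w₀ : W}
    (hf : DifferentiableAt ℝ (fun p : E × W => f p.1 p.2) (y w₀, w₀))
    (hg : DifferentiableAt ℝ g (y w₀)) (hy : DifferentiableAt ℝ y w₀)
    (hadj : ∀ u, ⟪dlam, u⟫ = -⟪lam, fderiv ℝ (fun z => f z w₀) (y w₀) u⟫ - fderiv ℝ g (y w₀) u)
    (v : W) :
    fderiv ℝ (fun w => lagrangian f g lam dlam (y w) w) w₀ v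
      = ⟪lam, fderiv ℝ (fun w => f (y w₀) w) w₀ v⟫ := by
  have hL := ((hg.hasFDerivAt.comp w₀ hy.hasFDerivAt).add
    ((innerSL ℝ lam).hasFDerivAt.comp w₀ (hasFDerivAt_uncurry_comp_prodMk hf hy))).add
    ((innerSL ℝ dlam).hasFDerivAt.comp w₀ hy.hasFDerivAt)
  rw [HasFDerivAt.fderiv (f := fun w => lagrangian f g lam dlam (y w) w) hL]
  simp only [add_apply, comp_apply, innerSL_apply_apply, inner_add_right, hadj]
  ring

theorem continuous_of_adjoint_eq [CompleteSpace E] [NormedAddCommGroup W] [NormedSpace ℝ W]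
    {f : E → W → E} {g : E → ℝ} {w₀ : W} {y l dl : ℝ → E}
    (hf : ContDiff ℝ 1 fun p : E × W => f p.1 p.2) (hg : ContDiff ℝ 1 g)
    (hy : Continuous y) (hl : Continuous l)
    (hadj : ∀ s u, ⟪dl s, u⟫ = -⟪l s, fderiv ℝ (fun z => f z w₀) (y s) u⟫ - fderiv ℝ g (y s) u) :
    Continuous dl :=
  continuous_of_inner_eq_apply (φ := fun s =>
      -(innerSL ℝ (l s)).comp (fderiv ℝ (fun z => f z w₀) (y s)) - fderiv ℝ g (y s))
    ((((innerSL ℝ).continuous.comp hl).clm_comp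
      (hf.continuous_fderiv_partial_left.comp (hy.prodMk continuous_const))).neg.sub
      ((hg.continuous_fderiv one_ne_zero).comp hy))
    fun s u => by simp [hadj]

theorem contDiff_lagrangian_comp [NormedAddCommGroup W] [NormedSpace ℝ W]
    {f : E → W → E} {g : E → ℝ} {x : ℝ → W → E}
    (hf : ContDiff ℝ 1 fun p : E × W => f p.1 p.2) (hg : ContDiff ℝ 1 g)
    (hx : ContDiff ℝ 1 fun p : ℝ × W => x p.1 p.2) :
    ContDiff ℝ 1 fun q : (ℝ × E × E) × W => lagrangian f g q.1.2.1 q.1.2.2 (x q.1.1 q.2) q.2 := by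
  have hX : ContDiff ℝ 1 fun q : (ℝ × E × E) × W => x q.1.1 q.2 :=
    hx.comp (contDiff_fst.fst.prodMk contDiff_snd)
  exact ((hg.comp hX).add (contDiff_fst.snd.fst.inner ℝ (hf.comp (hX.prodMk contDiff_snd)))).add
    (contDiff_fst.snd.snd.inner ℝ hX)

end Lagrangian

theorem stmt_11_general {n m : ℕ}
    (f : EuclideanSpace ℝ (Fin n) → EuclideanSpace ℝ (Fin m) → EuclideanSpace ℝ (Fin n))
    (hf : ContDiff ℝ 1 fun p : EuclideanSpace ℝ (Fin n) × EuclideanSpace ℝ (Fin m) => f p.1 p.2)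
    (x : ℝ → EuclideanSpace ℝ (Fin m) → EuclideanSpace ℝ (Fin n))
    (x₀ : EuclideanSpace ℝ (Fin n)) (hx0 : ∀ w, x 0 w = x₀)
    (hx : ContDiff ℝ 1 fun p : ℝ × EuclideanSpace ℝ (Fin m) => x p.1 p.2)
    (hsol : ∀ (s : ℝ) (w : EuclideanSpace ℝ (Fin m)), HasDerivAt (fun t => x t w) (f (x s w) w) s)
    (g : EuclideanSpace ℝ (Fin n) → ℝ) (hg : ContDiff ℝ 1 g)
    (S : ℝ) (w₀ : EuclideanSpace ℝ (Fin m))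
    (l dl : ℝ → EuclideanSpace ℝ (Fin n))
    (hl : ∀ s : ℝ, HasDerivAt l (dl s) s)
    (hadj : ∀ (s : ℝ) (v : EuclideanSpace ℝ (Fin n)),
      ⟪dl s, v⟫ = -⟪l s, fderiv ℝ (fun y => f y w₀) (x s w₀) v⟫ - fderiv ℝ g (x s w₀) v)
    (hterm : l S = 0) :
    ∀ v : EuclideanSpace ℝ (Fin m),
      fderiv ℝ (fun w => ∫ τ in (0:ℝ)..S, g (x τ w)) w₀ v =
        ∫ τ in (0:ℝ)..S, ⟪l τ, fderiv ℝ (fun w => f (x τ w₀) w) w₀ v⟫ := by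
  intro v
  have hlc : Continuous l := continuous_iff_continuousAt.2 fun s => (hl s).continuousAt
  have hdl : Continuous dl := continuous_of_adjoint_eq hf hg
    (hx.continuous.comp (continuous_id.prodMk continuous_const)) hlc hadj
  have hcost : ∀ w, ∫ τ in (0:ℝ)..S, g (x τ w)
      = (∫ τ in (0:ℝ)..S, lagrangian f g (l τ) (dl τ) (x τ w) w) + ⟪l 0, x₀⟫ := fun w => by
    rw [integral_lagrangian_eq (f := f) (w := w)
      (hf.continuous.comp (continuous_id.prodMk continuous_const)) hg.continuous (hsol · w) hl hdl,
      hterm, hx0]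
    simp
  have hderiv := fderiv_intervalIntegral_comp_apply_of_contDiff (contDiff_lagrangian_comp hf hg hx)
    (continuous_id'.prodMk (hlc.prodMk hdl)) 0 S w₀ v
  dsimp only at hderiv
  rw [funext hcost, fderiv_add_const, hderiv]
  exact intervalIntegral.integral_congr fun τ _ => fderiv_lagrangian_comp_apply
    (hf.differentiable one_ne_zero _) (hg.differentiable one_ne_zero _)
    ((hx.differentiable one_ne_zero _).comp w₀
      ((differentiableAt_const τ).prodMk differentiableAt_id))
    (hadj τ) v

theorem stmt_11 {n m : ℕ}
    (f : EuclideanSpace ℝ (Fin n) → EuclideanSpace ℝ (Fin m) → EuclideanSpace ℝ (Fin n))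
    (hf : ContDiff ℝ 1 fun p : EuclideanSpace ℝ (Fin n) × EuclideanSpace ℝ (Fin m) => f p.1 p.2)
    (x : ℝ → EuclideanSpace ℝ (Fin m) → EuclideanSpace ℝ (Fin n))
    (x₀ : EuclideanSpace ℝ (Fin n)) (hx0 : ∀ w, x 0 w = x₀)
    (hx : ContDiff ℝ 1 fun p : ℝ × EuclideanSpace ℝ (Fin m) => x p.1 p.2)
    (hsol : ∀ (s : ℝ) (w : EuclideanSpace ℝ (Fin m)), HasDerivAt (fun t => x t w) (f (x s w) w) s)
    (g : EuclideanSpace ℝ (Fin n) → ℝ) (hg : ContDiff ℝ 1 g)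
    (S : ℝ) (hS : 0 < S) (w₀ : EuclideanSpace ℝ (Fin m))
    (l dl : ℝ → EuclideanSpace ℝ (Fin n))
    (hl : ∀ s : ℝ, HasDerivAt l (dl s) s)
    (hadj : ∀ (s : ℝ) (v : EuclideanSpace ℝ (Fin n)),
      ⟪dl s, v⟫ = -⟪l s, fderiv ℝ (fun y => f y w₀) (x s w₀) v⟫ - fderiv ℝ g (x s w₀) v)
    (hterm : l S = 0) :
    ∀ v : EuclideanSpace ℝ (Fin m),
      fderiv ℝ (fun w => ∫ τ in (0:ℝ)..S, g (x τ w)) w₀ v =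
        ∫ τ in (0:ℝ)..S, ⟪l τ, fderiv ℝ (fun w => f (x τ w₀) w) w₀ v⟫ :=
  stmt_11_general f hf x x₀ hx0 hx hsol g hg S w₀ l dl hl hadj hterm
end
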